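/- Let u¹, u² : ℝ → ℝ be smooth with u²(x) > 0 for all x, and set v¹ = u² − u¹, v² = log u². Define differential operators on pairs ξ = (ξ₁, ξ₂) of smooth functions by 𝒫₂;₀(ξ) = ( u¹(u²ξ₂)′, u²(u¹ξ₁)′ + 2u²(u²ξ₂)′ ), K(ξ) = (−ξ₁ + ξ₂, ξ₂/u²), and Kᵀ(ξ) = (−ξ₁, ξ₁ + ξ₂/u²). Then for every pair ξ, (K ∘ 𝒫₂;₀ ∘ Kᵀ)(ξ) = ( 2v¹e^{v²}ξ₁′ + (v¹e^{v²})′ξ₁ + (v¹ + e^{v²})ξ₂′, (v¹ + e^{v²})ξ₁′ + (v¹ + e^{v²})′ξ₁ + 2ξ₂′ ). That is, under the change of variables v¹ = u² − u¹, v² = log u², the dispersionless limit 𝒫₂;₀ of the second Hamiltonian operator of the Ablowitz–Ladik hierarchy becomes the hydrodynamic operator induced by the intersection form g = [[2v¹e^{v²}, v¹ + e^{v²}],[v¹ + e^{v²}, 2]] of the generalized Frobenius manifold with potential F = ½(v¹)²v² + v¹e^{v²} + ½(v¹)²log v¹. -/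

import Mathlib

/-- The dispersionless limit of the second Hamiltonian operator of the Ablowitz–Ladik
hierarchy, `𝒫₂;₀(ξ) = ( u¹(u²ξ₂)′, u²(u¹ξ₁)′ + 2u²(u²ξ₂)′ )`. -/
noncomputable def P20 (u1 u2 : ℝ → ℝ) (ξ : (ℝ → ℝ) × (ℝ → ℝ)) : (ℝ → ℝ) × (ℝ → ℝ) :=
  (fun x => u1 x * deriv (fun y => u2 y * ξ.2 y) x,
   fun x => u2 x * deriv (fun y => u1 y * ξ.1 y) x
      + 2 * u2 x * deriv (fun y => u2 y * ξ.2 y) x)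

/-- The Jacobian `K(ξ) = (−ξ₁ + ξ₂, ξ₂/u²)` of the change of variables
`v¹ = u² − u¹`, `v² = log u²`. -/
noncomputable def Kop (u2 : ℝ → ℝ) (ξ : (ℝ → ℝ) × (ℝ → ℝ)) : (ℝ → ℝ) × (ℝ → ℝ) :=
  (fun x => -ξ.1 x + ξ.2 x, fun x => ξ.2 x / u2 x)

/-- The transpose Jacobian `Kᵀ(ξ) = (−ξ₁, ξ₁ + ξ₂/u²)`. -/
noncomputable def KopT (u2 : ℝ → ℝ) (ξ : (ℝ → ℝ) × (ℝ → ℝ)) : (ℝ → ℝ) × (ℝ → ℝ) :=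
  (fun x => -ξ.1 x, fun x => ξ.1 x + ξ.2 x / u2 x)

/-! Since `u²(ξ₁ + ξ₂/u²) = u²ξ₁ + ξ₂`, the composite `K ∘ 𝒫₂;₀ ∘ Kᵀ` is, for nonvanishing `u²`,
an algebraic combination of `(u²ξ₁ + ξ₂)′` and `(u¹ξ₁)′`, with no derivative of `1/u²` involved.
In the new coordinates `e^{v²} = u²`, so `v¹e^{v²} = (u² − u¹)u²` and `v¹ + e^{v²} = 2u² − u¹`, and
the product rule turns both sides into the same polynomial in `u¹, u², ξ₁, ξ₂` and their derivatives. -/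

open Real

section

variable {u1 u2 : ℝ → ℝ}

theorem P20_KopT (hu2ne : ∀ x, u2 x ≠ 0) (ξ1 ξ2 : ℝ → ℝ) :
    P20 u1 u2 (KopT u2 (ξ1, ξ2)) =
      (fun x => u1 x * deriv (fun y => u2 y * ξ1 y + ξ2 y) x,
       fun x => -(u2 x * deriv (fun y => u1 y * ξ1 y) x)
          + 2 * u2 x * deriv (fun y => u2 y * ξ1 y + ξ2 y) x) := by
  have hcancel : (fun y => u2 y * (ξ1 y + ξ2 y / u2 y)) = fun y => u2 y * ξ1 y + ξ2 y := by
    funext y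
    rw [mul_add, mul_div_cancel₀ _ (hu2ne y)]
  simp only [P20, KopT, hcancel, mul_neg, deriv.fun_neg]

theorem Kop_comp_P20_comp_KopT (hu2ne : ∀ x, u2 x ≠ 0) (ξ1 ξ2 : ℝ → ℝ) :
    (Kop u2 ∘ P20 u1 u2 ∘ KopT u2) (ξ1, ξ2) =
      (fun x => (2 * u2 x - u1 x) * deriv (fun y => u2 y * ξ1 y + ξ2 y) x
          - u2 x * deriv (fun y => u1 y * ξ1 y) x,
       fun x => 2 * deriv (fun y => u2 y * ξ1 y + ξ2 y) x
          - deriv (fun y => u1 y * ξ1 y) x) := by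
  rw [Function.comp_apply, Function.comp_apply, P20_KopT hu2ne]
  refine Prod.ext (funext fun x => ?_) (funext fun x => ?_)
  · simp only [Kop]
    ring
  · simp only [Kop]
    field_simp [hu2ne x]
    ring

end

/-- Under the change of variables `v¹ = u² − u¹`, `v² = log u²`, the
dispersionless limit `𝒫₂;₀` of the second Hamiltonian operator of the Ablowitz–Ladik
hierarchy becomes the hydrodynamic operator induced by the intersection form
`g = [[2v¹e^{v²}, v¹ + e^{v²}],[v¹ + e^{v²}, 2]]` of the generalized Frobenius manifold
with potential `F = ½(v¹)²v² + v¹e^{v²} + ½(v¹)² log v¹`. -/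
theorem dispersionless_P2_intersection_form
    (u1 u2 : ℝ → ℝ) (hu1 : ContDiff ℝ (⊤ : ℕ∞) u1) (hu2 : ContDiff ℝ (⊤ : ℕ∞) u2)
    (hu2pos : ∀ x : ℝ, u2 x > 0)
    (v1 v2 : ℝ → ℝ)
    (hv1 : ∀ x : ℝ, v1 x = u2 x - u1 x) (hv2 : ∀ x : ℝ, v2 x = Real.log (u2 x))
    (ξ1 ξ2 : ℝ → ℝ) (hξ1 : ContDiff ℝ (⊤ : ℕ∞) ξ1) (hξ2 : ContDiff ℝ (⊤ : ℕ∞) ξ2) :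
    (Kop u2 ∘ P20 u1 u2 ∘ KopT u2) (ξ1, ξ2) =
      (fun x => 2 * v1 x * Real.exp (v2 x) * deriv ξ1 x
          + deriv (fun y => v1 y * Real.exp (v2 y)) x * ξ1 x
          + (v1 x + Real.exp (v2 x)) * deriv ξ2 x,
       fun x => (v1 x + Real.exp (v2 x)) * deriv ξ1 x
          + deriv (fun y => v1 y + Real.exp (v2 y)) x * ξ1 x
          + 2 * deriv ξ2 x) := by
  have hu2ne : ∀ x, u2 x ≠ 0 := fun x => (hu2pos x).ne'
  have hexp : ∀ x, exp (v2 x) = u2 x := fun x => by rw [hv2, exp_log (hu2pos x)]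
  have hd1 : Differentiable ℝ u1 := hu1.differentiable (by simp)
  have hd2 : Differentiable ℝ u2 := hu2.differentiable (by simp)
  have hdξ1 : Differentiable ℝ ξ1 := hξ1.differentiable (by simp)
  have hdξ2 : Differentiable ℝ ξ2 := hξ2.differentiable (by simp)
  rw [Kop_comp_P20_comp_KopT hu2ne]
  simp only [hv1, hexp]
  refine Prod.ext (funext fun x => ?_) (funext fun x => ?_) <;>
    simp (disch := fun_prop) only [deriv_fun_add, deriv_fun_mul, deriv_fun_sub] <;> ring
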